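/- Let C : Fin d → Fin d → Fin d → ℝ be antisymmetric in its two upper indices, and t^σ := Σ_ν C^{νσ}_ν. Let M, Q : (Fin d → ℝ) → ℝ be continuously differentiable and f : (Fin d → ℝ) → ℝ be twice continuously differentiable with compact support, and suppose δM, δQ : (Fin d → ℝ) → ℝ satisfy, for all x: δM(x) = M(x)·Σ_σ t^σ·∂_σ f(x) + {M,f}(x) and δQ(x) = {Q,f}(x). Then ∫_{ℝ^d} (Q(x)·δM(x) + M(x)·δQ(x)) dx = 0, the integral being taken with respect to Lebesgue measure on Fin d → ℝ. -/

import Mathlib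

/-! The integrand is a total divergence. Let `X_f^μ = Σ x_λ C^{μν}_λ ∂_ν f` be the Hamiltonian
vector field of `f`, so that `{g, f} = X_f · ∇g`. The Leibniz rule gives
`div (M Q X_f) = {M Q, f} + M Q div X_f = Q {M, f} + M {Q, f} + M Q div X_f`. In `div X_f`,
differentiating the coordinate `x_λ` produces `Σ_σ t^σ ∂_σ f`, while the terms with second
derivatives of `f` cancel, `C` being antisymmetric in `μ ν` and `∂_μ ∂_ν f` symmetric. Hence
`Q δM + M δQ = div (M Q X_f)`, and the divergence of a compactly supported `C¹` field integrates
to zero (integrate each `∂_μ` by parts against the constant `1`). -/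

open MeasureTheory

/-- Partial derivative in the `μ`-th coordinate direction. -/
noncomputable def pd {d : ℕ} (μ : Fin d) (g : (Fin d → ℝ) → ℝ) (x : Fin d → ℝ) : ℝ :=
  fderiv ℝ g x (Pi.single μ 1)

/-- The Lie-algebra-type Poisson bracket `{g,h}(x) = Σ x_λ C^{μν}_λ ∂_μ g ∂_ν h`. -/
noncomputable def pb {d : ℕ} (C : Fin d → Fin d → Fin d → ℝ) (g h : (Fin d → ℝ) → ℝ)
    (x : Fin d → ℝ) : ℝ :=
  ∑ lam, ∑ μ, ∑ ν, x lam * C μ ν lam * pd μ g x * pd ν h x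

theorem ContDiff.integrable_fderiv_apply_of_hasCompactSupport {E : Type*}
    [NormedAddCommGroup E] [NormedSpace ℝ E] [MeasurableSpace E] [OpensMeasurableSpace E]
    {μ : Measure E} [IsFiniteMeasureOnCompacts μ] {V : E → ℝ} (hV : ContDiff ℝ 1 V)
    (hVs : HasCompactSupport V) (v : E) : Integrable (fun x ↦ fderiv ℝ V x v) μ :=
  ((hV.continuous_fderiv one_ne_zero).clm_apply continuous_const).integrable_of_hasCompactSupport
    (hVs.fderiv_apply (𝕜 := ℝ) v)

theorem integral_fderiv_apply_eq_zero {E : Type*} [NormedAddCommGroup E] [NormedSpace ℝ E]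
    [FiniteDimensional ℝ E] [MeasurableSpace E] [BorelSpace E] (μ : Measure E)
    [μ.IsAddHaarMeasure] {V : E → ℝ} (hV : ContDiff ℝ 1 V) (hVs : HasCompactSupport V) (v : E) :
    ∫ x, fderiv ℝ V x v ∂μ = 0 := by
  have h := integral_mul_fderiv_eq_neg_fderiv_mul_of_integrable (μ := μ) (g := fun _ ↦ (1 : ℝ))
    (v := v) (by simpa using hV.integrable_fderiv_apply_of_hasCompactSupport hVs v)
    (by simp) (by simpa using hV.continuous.integrable_of_hasCompactSupport hVs)
    (fun x _ ↦ hV.differentiable one_ne_zero x) (fun x _ ↦ differentiableAt_const 1)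
  simpa using h.symm

theorem sum_sum_mul_eq_zero_of_antisymm_of_symm {ι R : Type*} [Fintype ι] [CommRing R]
    [NoZeroDivisors R] [CharZero R] {A S : ι → ι → R}
    (hA : ∀ i j, A i j = -A j i) (hS : ∀ i j, S i j = S j i) :
    ∑ i, ∑ j, A i j * S i j = 0 := by
  have h : ∑ i, ∑ j, A i j * S i j = -∑ i, ∑ j, A i j * S i j := by
    conv_lhs => rw [Finset.sum_comm]
    simp only [← Finset.sum_neg_distrib, ← neg_mul, ← hA, hS]
  exact CharZero.eq_neg_self_iff.mp h

section PartialDerivatives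

variable {d : ℕ} {g h : (Fin d → ℝ) → ℝ} {x : Fin d → ℝ}

theorem pd_mul (μ : Fin d) (hg : DifferentiableAt ℝ g x) (hh : DifferentiableAt ℝ h x) :
    pd μ (fun y ↦ g y * h y) x = pd μ g x * h x + g x * pd μ h x := by
  simp only [pd, fderiv_fun_mul hg hh, add_apply, smul_apply, smul_eq_mul]
  ring

theorem pd_finsetSum {ι : Type*} (s : Finset ι) {G : ι → (Fin d → ℝ) → ℝ} (μ : Fin d)
    (hG : ∀ i ∈ s, DifferentiableAt ℝ (G i) x) :
    pd μ (fun y ↦ ∑ i ∈ s, G i y) x = ∑ i ∈ s, pd μ (G i) x := by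
  simp [pd, fderiv_fun_sum hG]

theorem pd_const_mul (μ : Fin d) (c : ℝ) (hg : DifferentiableAt ℝ g x) :
    pd μ (fun y ↦ c * g y) x = c * pd μ g x := by
  simp [pd, fderiv_const_mul hg]

theorem pd_apply (μ lam : Fin d) : pd μ (fun y ↦ y lam) x = (Pi.single μ 1 : Fin d → ℝ) lam := by
  rw [pd, show (fun y : Fin d → ℝ ↦ y lam) = ContinuousLinearMap.proj (R := ℝ) lam from rfl,
    ContinuousLinearMap.fderiv]
  rfl

theorem pd_pd (μ ν : Fin d) (hg : DifferentiableAt ℝ (fderiv ℝ g) x) :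
    pd μ (pd ν g) x = fderiv ℝ (fderiv ℝ g) x (Pi.single μ 1) (Pi.single ν 1) := by
  unfold pd
  rw [fderiv_clm_apply hg (differentiableAt_const _)]
  simp

theorem pd_pd_comm (μ ν : Fin d) (hg : ContDiffAt ℝ 2 g x) :
    pd μ (pd ν g) x = pd ν (pd μ g) x := by
  have hdiff : DifferentiableAt ℝ (fderiv ℝ g) x :=
    (hg.fderiv_right (m := 1) le_rfl).differentiableAt one_ne_zero
  rw [pd_pd μ ν hdiff, pd_pd ν μ hdiff, hg.isSymmSndFDerivAt (by simp)]

theorem ContDiff.pd {n m : WithTop ℕ∞} (hg : ContDiff ℝ n g) (hmn : m + 1 ≤ n) (μ : Fin d) :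
    ContDiff ℝ m (pd μ g) :=
  (hg.fderiv_right hmn).clm_apply contDiff_const

end PartialDerivatives

theorem pb_mul_left {d : ℕ} (C : Fin d → Fin d → Fin d → ℝ) {g h : (Fin d → ℝ) → ℝ}
    (f : (Fin d → ℝ) → ℝ) {x : Fin d → ℝ} (hg : DifferentiableAt ℝ g x)
    (hh : DifferentiableAt ℝ h x) :
    pb C (fun y ↦ g y * h y) f x = h x * pb C g f x + g x * pb C h f x := by
  simp only [pb, pd_mul _ hg hh, Finset.mul_sum, ← Finset.sum_add_distrib]
  exact Finset.sum_congr rfl fun _ _ ↦ Finset.sum_congr rfl fun _ _ ↦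
    Finset.sum_congr rfl fun _ _ ↦ by ring

noncomputable def divergence {d : ℕ} (V : Fin d → (Fin d → ℝ) → ℝ) (x : Fin d → ℝ) : ℝ :=
  ∑ μ, pd μ (V μ) x

theorem divergence_mul {d : ℕ} {L : (Fin d → ℝ) → ℝ} {V : Fin d → (Fin d → ℝ) → ℝ}
    {x : Fin d → ℝ} (hL : DifferentiableAt ℝ L x) (hV : ∀ μ, DifferentiableAt ℝ (V μ) x) :
    divergence (fun μ y ↦ L y * V μ y) x = ∑ μ, pd μ L x * V μ x + L x * divergence V x := by
  simp only [divergence, pd_mul _ hL (hV _), Finset.sum_add_distrib, Finset.mul_sum]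

theorem integral_divergence_eq_zero {d : ℕ} {V : Fin d → (Fin d → ℝ) → ℝ}
    (hV : ∀ μ, ContDiff ℝ 1 (V μ)) (hVs : ∀ μ, HasCompactSupport (V μ)) :
    ∫ x, divergence V x = 0 := by
  unfold divergence pd
  rw [integral_finsetSum _ fun μ _ ↦
    (hV μ).integrable_fderiv_apply_of_hasCompactSupport (hVs μ) _]
  exact Finset.sum_eq_zero fun μ _ ↦ integral_fderiv_apply_eq_zero _ (hV μ) (hVs μ) _

section HamiltonianField

variable {d : ℕ} (C : Fin d → Fin d → Fin d → ℝ) {f : (Fin d → ℝ) → ℝ}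

noncomputable def hamiltonianField (f : (Fin d → ℝ) → ℝ) (μ : Fin d) (y : Fin d → ℝ) : ℝ :=
  ∑ lam, ∑ ν, C μ ν lam * (y lam * pd ν f y)

theorem pb_eq_sum_pd_mul_hamiltonianField (g f : (Fin d → ℝ) → ℝ) (x : Fin d → ℝ) :
    pb C g f x = ∑ μ, pd μ g x * hamiltonianField C f μ x := by
  simp only [pb, hamiltonianField, Finset.mul_sum]
  rw [Finset.sum_comm]
  exact Finset.sum_congr rfl fun _ _ ↦ Finset.sum_congr rfl fun _ _ ↦
    Finset.sum_congr rfl fun _ _ ↦ by ring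

theorem contDiff_hamiltonianField {n : WithTop ℕ∞} (hf : ContDiff ℝ (n + 1) f) (μ : Fin d) :
    ContDiff ℝ n (hamiltonianField C f μ) :=
  ContDiff.sum fun lam _ ↦ ContDiff.sum fun ν _ ↦
    contDiff_const.mul ((contDiff_apply ℝ ℝ lam).mul (hf.pd le_rfl ν))

theorem hasCompactSupport_hamiltonianField (hf : HasCompactSupport f) (μ : Fin d) :
    HasCompactSupport (hamiltonianField C f μ) := by
  refine hf.fderiv (𝕜 := ℝ) |>.mono fun y hy ↦ ?_
  contrapose! hy
  simp [hamiltonianField, pd, Function.notMem_support.mp hy]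

theorem pd_hamiltonianField (hf : ContDiff ℝ 2 f) (μ : Fin d) (x : Fin d → ℝ) :
    pd μ (hamiltonianField C f μ) x =
      ∑ ν, C μ ν μ * pd ν f x + ∑ lam, x lam * ∑ ν, C μ ν lam * pd μ (pd ν f) x := by
  have hpd : ∀ ν, Differentiable ℝ (pd ν f) := fun ν ↦
    (hf.pd (m := 1) le_rfl ν).differentiable one_ne_zero
  have hinner : ∀ lam, pd μ (fun y ↦ ∑ ν, C μ ν lam * (y lam * pd ν f y)) x =
      ∑ ν, C μ ν lam * ((Pi.single μ 1 : Fin d → ℝ) lam * pd ν f x + x lam * pd μ (pd ν f) x) := by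
    intro lam
    rw [pd_finsetSum (G := fun ν y ↦ C μ ν lam * (y lam * pd ν f y)) _ _ fun ν _ ↦ by fun_prop]
    refine Finset.sum_congr rfl fun ν _ ↦ ?_
    rw [pd_const_mul _ _ (by fun_prop), pd_mul _ (by fun_prop) (hpd ν x), pd_apply]
  unfold hamiltonianField
  rw [pd_finsetSum (G := fun lam y ↦ ∑ ν, C μ ν lam * (y lam * pd ν f y)) _ _
    fun lam _ ↦ by fun_prop]
  simp only [hinner, mul_add, Finset.sum_add_distrib]
  congr 1
  · simp [Pi.single_apply]
  · simp only [Finset.mul_sum]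
    exact Finset.sum_congr rfl fun _ _ ↦ Finset.sum_congr rfl fun _ _ ↦ by ring

theorem divergence_hamiltonianField (hC : ∀ μ ν lam, C μ ν lam = -C ν μ lam)
    (hf : ContDiff ℝ 2 f) (x : Fin d → ℝ) :
    divergence (hamiltonianField C f) x = ∑ σ, (∑ ν, C ν σ ν) * pd σ f x := by
  have hsymm : ∀ lam, ∑ μ, ∑ ν, C μ ν lam * pd μ (pd ν f) x = 0 := fun lam ↦
    sum_sum_mul_eq_zero_of_antisymm_of_symm (fun μ ν ↦ hC μ ν lam)
      fun μ ν ↦ pd_pd_comm μ ν hf.contDiffAt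
  simp only [divergence, pd_hamiltonianField C hf, Finset.sum_add_distrib]
  rw [Finset.sum_comm (γ := Fin d) (f := fun μ lam ↦ x lam * _)]
  simp only [← Finset.mul_sum, hsymm, mul_zero, Finset.sum_const_zero, add_zero, Finset.sum_mul]
  exact Finset.sum_comm

end HamiltonianField

/-- Gauge invariance of the action (Proposition 4): for compactly supported gauge
parameter `f`, the variation `Q·δM + M·δQ` of the Lagrangian density integrates to zero. -/
theorem gauge_variation_integral_zero {d : ℕ} (C : Fin d → Fin d → Fin d → ℝ)
    (hC : ∀ μ ν lam, C μ ν lam = - C ν μ lam)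
    (t : Fin d → ℝ) (ht : t = fun σ => ∑ ν, C ν σ ν)
    (M Q f : (Fin d → ℝ) → ℝ)
    (hM : ContDiff ℝ 1 M) (hQ : ContDiff ℝ 1 Q) (hf : ContDiff ℝ 2 f)
    (hfsupp : HasCompactSupport f)
    (δM δQ : (Fin d → ℝ) → ℝ)
    (hδM : ∀ x, δM x = M x * (∑ σ, t σ * pd σ f x) + pb C M f x)
    (hδQ : ∀ x, δQ x = pb C Q f x) :
    ∫ x : Fin d → ℝ, (Q x * δM x + M x * δQ x) = 0 := by
  have hMQ : ContDiff ℝ 1 fun y ↦ M y * Q y := hM.mul hQ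
  have hX : ∀ μ, ContDiff ℝ 1 (hamiltonianField C f μ) := contDiff_hamiltonianField C hf
  have hdensity : ∀ x, Q x * δM x + M x * δQ x =
      divergence (fun μ y ↦ M y * Q y * hamiltonianField C f μ y) x := by
    intro x
    rw [divergence_mul (hMQ.differentiable one_ne_zero x)
        fun μ ↦ (hX μ).differentiable one_ne_zero x,
      divergence_hamiltonianField C hC hf, ← pb_eq_sum_pd_mul_hamiltonianField,
      pb_mul_left C f (hM.differentiable one_ne_zero x) (hQ.differentiable one_ne_zero x),
      hδM, hδQ, ht]
    ring
  simp_rw [hdensity]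
  exact integral_divergence_eq_zero (fun μ ↦ hMQ.mul (hX μ))
    fun μ ↦ (hasCompactSupport_hamiltonianField C hfsupp μ).mul_left
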